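/- (Example 1: the three rate regions coincide.) Fix Γ ∈ [0,1]. Define, for α, β ∈ [0,1], the regions of pairs (R_X, R_Y) ∈ ℝ²: region_A(α,β) = { R_X ≥ 1 − 0.5(α+β̄)·H_b(α/(α+β̄)), R_Y ≥ 0.5(ᾱ+β), R_X + R_Y ≥ 1 + 0.5(ᾱ+β) } (where the term 0.5(α+β̄)·H_b(α/(α+β̄)) is defined to be 0 when α+β̄ = 0); region_B(α,β) = { R_X ≥ 1 − H_b(0.5α + 0.25(β+ᾱ)) + 0.5(ᾱ+β), R_Y ≥ 0.5(ᾱ+β), R_X + R_Y ≥ 1 + 0.5(ᾱ+β) }; and, for a ∈ [0,1], region_C(a) = { R_X ≥ 1 − a, R_Y ≥ 1 − a, R_X + R_Y ≥ 2 − a }. Then the union of region_A(α,β) over all (α,β) ∈ [0,1]² with 0.5(α+β̄) ≤ Γ, the union of region_B(α,β) over the same set of (α,β), and the union of region_C(a) over all a ∈ [0,1] with a ≤ Γ, are all equal to { (R_X, R_Y) : R_X ≥ 1 − Γ, R_Y ≥ 1 − Γ, R_X + R_Y ≥ 2 − Γ }. -/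
import Mathlib

/-- Binary entropy `H_b(q) = −q·log₂ q − (1−q)·log₂(1−q)` (with `0·log 0 = 0`). -/
noncomputable def binEnt (q : ℝ) : ℝ :=
  Real.negMulLog q / Real.log 2 + Real.negMulLog (1 - q) / Real.log 2

/-- Example 1 rate region for case A (actions at the decoder), for parameters `α, β`.
(When `α + (1−β) = 0` the term `0.5(α+β̄)·H_b(α/(α+β̄))` is `0`, as is automatic here
since the factor `0.5(α+β̄)` vanishes and `x/0 = 0` in Lean.) -/
def regionA (α β : ℝ) : Set (ℝ × ℝ) :=
  {r | 1 - 0.5 * (α + (1 - β)) * binEnt (α / (α + (1 - β))) ≤ r.1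
      ∧ 0.5 * ((1 - α) + β) ≤ r.2
      ∧ 1 + 0.5 * ((1 - α) + β) ≤ r.1 + r.2}

/-- Example 1 rate region for case B (actions at the encoder), for parameters `α, β`. -/
def regionB (α β : ℝ) : Set (ℝ × ℝ) :=
  {r | 1 - binEnt (0.5 * α + 0.25 * (β + (1 - α))) + 0.5 * ((1 - α) + β) ≤ r.1
      ∧ 0.5 * ((1 - α) + β) ≤ r.2
      ∧ 1 + 0.5 * ((1 - α) + β) ≤ r.1 + r.2}

/-- Example 1 rate region for case C (actions taken before `X^n` is known), parameter `a`. -/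
def regionC (a : ℝ) : Set (ℝ × ℝ) :=
  {r | 1 - a ≤ r.1 ∧ 1 - a ≤ r.2 ∧ 2 - a ≤ r.1 + r.2}

lemma binEnt_eq (q : ℝ) : binEnt q = Real.binEntropy q / Real.log 2 := by
  rw [Real.binEntropy_eq_negMulLog_add_negMulLog_one_sub, binEnt, add_div]

lemma binEnt_le_one (q : ℝ) : binEnt q ≤ 1 := by
  rw [binEnt_eq, div_le_one (Real.log_pos one_lt_two)]
  exact Real.binEntropy_le_log_two

lemma binEnt_half : binEnt (1/2) = 1 := by
  rw [binEnt_eq, show (1:ℝ)/2 = 2⁻¹ by norm_num, Real.binEntropy_two_inv]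
  exact div_self (Real.log_pos one_lt_two).ne'

/-- Example 1: for any cost `Γ ∈ [0,1]`, the three cost-constrained unions of rate regions
(case A, case B, and case C) all coincide with
`{(R_X, R_Y) : R_X ≥ 1 − Γ, R_Y ≥ 1 − Γ, R_X + R_Y ≥ 2 − Γ}`. -/
theorem stmt_10 (Γ : ℝ) (hΓ : Γ ∈ Set.Icc (0:ℝ) 1) :
    ({r : ℝ × ℝ | ∃ α β : ℝ, α ∈ Set.Icc (0:ℝ) 1 ∧ β ∈ Set.Icc (0:ℝ) 1
        ∧ 0.5 * (α + (1 - β)) ≤ Γ ∧ r ∈ regionA α β}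
      = {r : ℝ × ℝ | 1 - Γ ≤ r.1 ∧ 1 - Γ ≤ r.2 ∧ 2 - Γ ≤ r.1 + r.2})
    ∧ ({r : ℝ × ℝ | ∃ α β : ℝ, α ∈ Set.Icc (0:ℝ) 1 ∧ β ∈ Set.Icc (0:ℝ) 1
        ∧ 0.5 * (α + (1 - β)) ≤ Γ ∧ r ∈ regionB α β}
      = {r : ℝ × ℝ | 1 - Γ ≤ r.1 ∧ 1 - Γ ≤ r.2 ∧ 2 - Γ ≤ r.1 + r.2})
    ∧ ({r : ℝ × ℝ | ∃ a : ℝ, a ∈ Set.Icc (0:ℝ) 1 ∧ a ≤ Γ ∧ r ∈ regionC a}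
      = {r : ℝ × ℝ | 1 - Γ ≤ r.1 ∧ 1 - Γ ≤ r.2 ∧ 2 - Γ ≤ r.1 + r.2}) := by
  obtain ⟨hΓ0, hΓ1⟩ := hΓ
  refine ⟨?_, ?_, ?_⟩
  · ext r
    simp only [Set.mem_setOf_eq, regionA]
    constructor
    · rintro ⟨α, β, ⟨hα0, hα1⟩, ⟨hβ0, hβ1⟩, hc, h1, h2, h3⟩
      have hc0 : (0:ℝ) ≤ 0.5 * (α + (1 - β)) := by nlinarith
      have hb : 0.5 * (α + (1 - β)) * binEnt (α / (α + (1 - β))) ≤ 0.5 * (α + (1 - β)) :=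
        mul_le_of_le_one_right hc0 (binEnt_le_one _)
      refine ⟨by linarith, by linarith, by linarith⟩
    · rintro ⟨h1, h2, h3⟩
      refine ⟨Γ, 1 - Γ, ⟨hΓ0, hΓ1⟩, ⟨by linarith, by linarith⟩, by linarith, ?_, by linarith, by linarith⟩
      rcases eq_or_lt_of_le hΓ0 with h0 | h0
      · rw [← h0]; norm_num; linarith
      · have : Γ / (Γ + (1 - (1 - Γ))) = 1/2 := by
          rw [show Γ + (1 - (1 - Γ)) = 2 * Γ by ring]
          field_simp
        rw [this, binEnt_half]
        nlinarith
  · ext r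
    simp only [Set.mem_setOf_eq, regionB]
    constructor
    · rintro ⟨α, β, ⟨hα0, hα1⟩, ⟨hβ0, hβ1⟩, hc, h1, h2, h3⟩
      have hb := binEnt_le_one (0.5 * α + 0.25 * (β + (1 - α)))
      refine ⟨by linarith, by linarith, by linarith⟩
    · rintro ⟨h1, h2, h3⟩
      refine ⟨Γ, 1 - Γ, ⟨hΓ0, hΓ1⟩, ⟨by linarith, by linarith⟩, by linarith, ?_, by linarith, by linarith⟩
      have : 0.5 * Γ + 0.25 * ((1 - Γ) + (1 - Γ)) = 1/2 := by ring
      rw [this, binEnt_half]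
      linarith
  · ext r
    simp only [Set.mem_setOf_eq, regionC]
    constructor
    · rintro ⟨a, ⟨ha0, ha1⟩, haΓ, h1, h2, h3⟩
      exact ⟨by linarith, by linarith, by linarith⟩
    · rintro ⟨h1, h2, h3⟩
      exact ⟨Γ, ⟨hΓ0, hΓ1⟩, le_refl _, h1, h2, h3⟩
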